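/- Let A and Z be commuting n×n matrices with Z = Σ_{j=0}^{n-1} c_j A^j, and suppose A is conjugated to its companion matrix C_A by P: C_A = P^{-1}AP. Then the principal i×i minor det((ZP)_{[1,i]}^{[1,i]}) equals the i×i determinant det(c_{l-1}^{(j-1)})_{1≤j,l≤i}, where the scalars c_l^{(j)} are defined by A^j Z = Σ_{l=0}^{n-1} c_l^{(j)} A^l. -/
import Mathlib

open Matrix

def esym {K : Type*} [Field K] (x : ℕ → K) (k m : ℕ) : K :=
  ∑ J ∈ (Finset.Icc 1 m).powersetCard k, ∏ j ∈ J, x j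

section aux
variable {K : Type*} [Field K] (x : ℕ → K)

theorem esym_zero (m : ℕ) : esym x 0 m = 1 := by
  simp [esym, Finset.powersetCard_zero]

theorem esym_of_lt {k m : ℕ} (h : m < k) : esym x k m = 0 := by
  rw [esym, Finset.powersetCard_eq_empty.2 (by simpa using h), Finset.sum_empty]

theorem esym_succ_succ (k m : ℕ) :
    esym x (k + 1) (m + 1) = esym x (k + 1) m + x (m + 1) * esym x k m := by
  have hins : Finset.Icc 1 (m + 1) = insert (m + 1) (Finset.Icc 1 m) := by
    ext a; simp [Finset.mem_Icc]; omega
  have hmem : (m + 1) ∉ Finset.Icc 1 m := by simp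
  rw [esym, hins, Finset.powersetCard_succ_insert hmem]
  rw [Finset.sum_union]
  · congr 1
    rw [Finset.sum_image]
    · rw [esym, Finset.mul_sum]
      refine Finset.sum_congr rfl fun J hJ => ?_
      rw [Finset.prod_insert]
      intro hmemJ
      exact hmem ((Finset.mem_powersetCard.1 hJ).1 hmemJ)
    · intro J hJ J' hJ' hEq
      have h1 : (m+1) ∉ J := fun hm => hmem ((Finset.mem_powersetCard.1 hJ).1 hm)
      have h2 : (m+1) ∉ J' := fun hm => hmem ((Finset.mem_powersetCard.1 hJ').1 hm)
      have := congrArg (Finset.erase · (m+1)) hEq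
      simpa [Finset.erase_insert h1, Finset.erase_insert h2] using this
  · rw [Finset.disjoint_left]
    intro J hJ hJ'
    obtain ⟨J0, hJ0, rfl⟩ := Finset.mem_image.1 hJ'
    exact hmem ((Finset.mem_powersetCard.1 hJ).1 (Finset.mem_insert_self _ _))

end aux

theorem stmt13' {K : Type*} [Field K] (n : ℕ) (x : ℕ → K)
    (A P Z : Matrix (Fin n) (Fin n) K)
    (hA : ∀ p q : Fin n, A p q =
      if p = q then x ((p : ℕ) + 1) else if (p : ℕ) + 1 = (q : ℕ) then -1 else 0)
    (hP : ∀ p q : Fin n, P p q =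
      if (q : ℕ) ≤ (p : ℕ) then esym x ((p : ℕ) - (q : ℕ)) (p : ℕ) else 0)
    (c : ℕ → Fin n → K)
    (hc : ∀ j : ℕ, A ^ j * Z = ∑ l : Fin n, c j l • A ^ (l : ℕ))
    (i : ℕ) (hi1 : 1 ≤ i) (hin : i ≤ n) :
    ((Z * P).submatrix (Fin.castLE hin) (Fin.castLE hin)).det =
      (Matrix.of (fun p q : Fin i => c (p : ℕ) (Fin.castLE hin q))).det := by
  have hn1 : 1 ≤ n := le_trans hi1 hin
  set L : ℕ → K := fun k => x n * esym x (n-1-k) (n-1) + esym x (n-k) (n-1) with hL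
  set C0 : Matrix (Fin n) (Fin n) K := Matrix.of (fun p k : Fin n =>
    if (p:ℕ)+1 = (k:ℕ) then (-1:K) else if (p:ℕ) = n-1 then L k else 0) with hC0
  -- step 1 : A * P = P * C0
  have hAP : A * P = P * C0 := by
    ext p k
    -- compute LHS
    have hLHS : (A * P) p k = x ((p:ℕ)+1) * P p k +
        (if h : (p:ℕ)+1 < n then -P ⟨(p:ℕ)+1, h⟩ k else 0) := by
      rw [Matrix.mul_apply]
      by_cases h : (p:ℕ)+1 < n
      · rw [dif_pos h]
        have : ∀ q : Fin n, A p q * P q k =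
            (if q = p then x ((p:ℕ)+1) * P p k else 0) +
            (if q = ⟨(p:ℕ)+1, h⟩ then -P ⟨(p:ℕ)+1, h⟩ k else 0) := by
          intro q
          rw [hA]
          rcases eq_or_ne q p with rfl | hq
          · simp [Fin.ext_iff]
          · rcases eq_or_ne q (⟨(p:ℕ)+1, h⟩ : Fin n) with rfl | hq2
            · have h1 : ¬ (p = (⟨(p:ℕ)+1, h⟩ : Fin n)) := by simp [Fin.ext_iff]
              have h1' : ((⟨(p:ℕ)+1, h⟩ : Fin n)) ≠ p := fun hh => h1 hh.symm
              simp [h1, h1']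
            · have h1 : ¬ (p = q) := fun hh => hq hh.symm
              have h2 : ¬ ((p:ℕ)+1 = (q:ℕ)) := by
                intro hh; exact hq2 (by simp [Fin.ext_iff, ← hh])
              simp [h1, h2, hq, hq2]
        rw [Finset.sum_congr rfl (fun q _ => this q), Finset.sum_add_distrib,
          Finset.sum_ite_eq' , Finset.sum_ite_eq']
        simp
      · rw [dif_neg h]
        have hpn : (p:ℕ) = n - 1 := by omega
        have : ∀ q : Fin n, A p q * P q k =
            (if q = p then x ((p:ℕ)+1) * P p k else 0) := by
          intro q
          rw [hA]
          rcases eq_or_ne q p with rfl | hq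
          · simp
          · have h1 : ¬ (p = q) := fun hh => hq hh.symm
            have h2 : ¬ ((p:ℕ)+1 = (q:ℕ)) := by
              have := q.isLt; omega
            simp [h1, h2, hq]
        rw [Finset.sum_congr rfl (fun q _ => this q), Finset.sum_ite_eq']
        simp
    -- compute RHS
    have pn : Fin n := ⟨n-1, by omega⟩
    have hRHS : (P * C0) p k =
        (if hk : 1 ≤ (k:ℕ) then -P p ⟨(k:ℕ)-1, by omega⟩ else 0) +
        P p ⟨n-1, by omega⟩ * L k := by
      rw [Matrix.mul_apply]
      by_cases hk : 1 ≤ (k:ℕ)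
      · rw [dif_pos hk]
        have hk1 : (k:ℕ)-1 < n := by omega
        have hne : (⟨(k:ℕ)-1, hk1⟩ : Fin n) ≠ ⟨n-1, by omega⟩ := by
          simp only [ne_eq, Fin.ext_iff]
          have := k.isLt; omega
        have : ∀ q : Fin n, P p q * C0 q k =
            (if q = ⟨(k:ℕ)-1, hk1⟩ then -P p ⟨(k:ℕ)-1, hk1⟩ else 0) +
            (if q = ⟨n-1, by omega⟩ then P p ⟨n-1, by omega⟩ * L k else 0) := by
          intro q
          rcases eq_or_ne q (⟨(k:ℕ)-1, hk1⟩ : Fin n) with rfl | hq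
          · have e1 : ((k:ℕ)-1)+1 = (k:ℕ) := by omega
            simp [hC0, e1, hne]
          · rcases eq_or_ne q (⟨n-1, by omega⟩ : Fin n) with rfl | hq2
            · have e1 : ¬ ((n-1)+1 = (k:ℕ)) := by have := k.isLt; omega
              have hq' : ((⟨n-1, by omega⟩ : Fin n)) ≠ ⟨(k:ℕ)-1, hk1⟩ := fun hh => hne hh.symm
              simp [hC0, e1, hq']
            · have e1 : ¬ ((q:ℕ)+1 = (k:ℕ)) := by
                intro hh
                exact hq (by simp [Fin.ext_iff]; omega)
              have e2 : ¬ ((q:ℕ) = n-1) := by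
                intro hh
                exact hq2 (by simp [Fin.ext_iff, hh])
              simp [hC0, e1, e2, hq, hq2]
        rw [Finset.sum_congr rfl (fun q _ => this q), Finset.sum_add_distrib,
          Finset.sum_ite_eq', Finset.sum_ite_eq']
        simp
      · rw [dif_neg hk]
        have hk0 : (k:ℕ) = 0 := by omega
        have : ∀ q : Fin n, P p q * C0 q k =
            (if q = ⟨n-1, by omega⟩ then P p ⟨n-1, by omega⟩ * L k else 0) := by
          intro q
          rcases eq_or_ne q (⟨n-1, by omega⟩ : Fin n) with rfl | hq2
          · have e1 : ¬ ((n-1)+1 = (k:ℕ)) := by omega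
            simp [hC0, e1]
          · have e1 : ¬ ((q:ℕ)+1 = (k:ℕ)) := by omega
            have e2 : ¬ ((q:ℕ) = n-1) := by
              intro hh; exact hq2 (by simp [Fin.ext_iff, hh])
            simp [hC0, e1, e2, hq2]
        rw [Finset.sum_congr rfl (fun q _ => this q), Finset.sum_ite_eq']
        simp
    rw [hLHS, hRHS]
    by_cases h : (p:ℕ)+1 < n
    · rw [dif_pos h]
      have hpn : ¬ (n-1 ≤ (p:ℕ)) := by omega
      rw [hP p ⟨n-1, by omega⟩]
      simp only [Fin.val_mk]
      rw [if_neg hpn, zero_mul, add_zero]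
      by_cases hk : 1 ≤ (k:ℕ)
      · rw [dif_pos hk, hP p k, hP ⟨(p:ℕ)+1, h⟩ k, hP p ⟨(k:ℕ)-1, by omega⟩]
        simp only [Fin.val_mk]
        rcases lt_trichotomy (k:ℕ) ((p:ℕ)+1) with hlt | heq | hgt
        · have h1 : (k:ℕ) ≤ (p:ℕ) := by omega
          have h2 : (k:ℕ) ≤ (p:ℕ)+1 := by omega
          have h3 : (k:ℕ)-1 ≤ (p:ℕ) := by omega
          rw [if_pos h1, if_pos h2, if_pos h3]
          have e1 : (p:ℕ)+1-(k:ℕ) = ((p:ℕ)-(k:ℕ))+1 := by omega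
          have e2 : (p:ℕ)-((k:ℕ)-1) = ((p:ℕ)-(k:ℕ))+1 := by omega
          rw [e1, e2, esym_succ_succ]
          ring
        · have h1 : ¬ ((k:ℕ) ≤ (p:ℕ)) := by omega
          have h2 : (k:ℕ) ≤ (p:ℕ)+1 := by omega
          have h3 : (k:ℕ)-1 ≤ (p:ℕ) := by omega
          rw [if_neg h1, if_pos h2, if_pos h3]
          have e1 : (p:ℕ)+1-(k:ℕ) = 0 := by omega
          have e2 : (p:ℕ)-((k:ℕ)-1) = 0 := by omega
          rw [e1, e2, esym_zero, esym_zero]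
          ring
        · have h1 : ¬ ((k:ℕ) ≤ (p:ℕ)) := by omega
          have h2 : ¬ ((k:ℕ) ≤ (p:ℕ)+1) := by omega
          have h3 : ¬ ((k:ℕ)-1 ≤ (p:ℕ)) := by omega
          rw [if_neg h1, if_neg h2, if_neg h3]
          ring
      · rw [dif_neg hk, hP p k, hP ⟨(p:ℕ)+1, h⟩ k]
        simp only [Fin.val_mk]
        have hk0 : (k:ℕ) = 0 := by omega
        have h1 : (k:ℕ) ≤ (p:ℕ) := by omega
        have h2 : (k:ℕ) ≤ (p:ℕ)+1 := by omega
        rw [if_pos h1, if_pos h2]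
        have e1 : (p:ℕ)+1-(k:ℕ) = ((p:ℕ)-(k:ℕ))+1 := by omega
        rw [e1, esym_succ_succ]
        have e2 : (p:ℕ)-(k:ℕ) = (p:ℕ) := by omega
        rw [e2, esym_of_lt x (Nat.lt_succ_self (p:ℕ))]
        ring
    · rw [dif_neg h]
      have hpv : (p:ℕ) = n-1 := by omega
      have hxn : (p:ℕ)+1 = n := by omega
      rw [hP p ⟨n-1, by omega⟩, hP p k]
      simp only [Fin.val_mk]
      rw [if_pos (show n-1 ≤ (p:ℕ) by omega), if_pos (show (k:ℕ) ≤ (p:ℕ) by omega)]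
      have e0 : (p:ℕ)-(n-1) = 0 := by omega
      rw [e0, esym_zero, hxn]
      have ep : (p:ℕ) = n-1 := hpv
      rw [ep]
      by_cases hk : 1 ≤ (k:ℕ)
      · rw [dif_pos hk, hP p ⟨(k:ℕ)-1, by omega⟩]
        simp only [Fin.val_mk]
        rw [if_pos (show (k:ℕ)-1 ≤ (p:ℕ) by omega), ep]
        have e2 : (n-1)-((k:ℕ)-1) = n-(k:ℕ) := by omega
        rw [e2]
        simp only [hL]
        ring
      · rw [dif_neg hk]
        have hk0 : (k:ℕ) = 0 := by omega
        simp only [hL, hk0]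
        rw [esym_of_lt x (by omega : n-1 < n-0)]
        simp
  -- row formula for powers of C0
  have h0 : (0:ℕ) < n := by omega
  have hrow : ∀ j : ℕ, j < n → ∀ q : Fin n,
      (C0 ^ j) ⟨0, h0⟩ q = if (q:ℕ) = j then (-1:K)^j else 0 := by
    intro j
    induction j with
    | zero =>
      intro hj q
      rw [pow_zero]
      simp [Matrix.one_apply, Fin.ext_iff, eq_comm]
    | succ j ih =>
      intro hj q
      have hjn : j < n := by omega
      rw [pow_succ, Matrix.mul_apply]
      have hsum : ∀ k : Fin n, (C0^j) ⟨0,h0⟩ k * C0 k q =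
          (if k = (⟨j, hjn⟩ : Fin n) then (-1:K)^j * C0 ⟨j,hjn⟩ q else 0) := by
        intro k
        rw [ih hjn]
        rcases eq_or_ne k (⟨j,hjn⟩ : Fin n) with rfl|hk
        · simp
        · have hkv : ¬((k:ℕ) = j) := fun hh => hk (Fin.ext hh)
          simp [hkv, hk]
      rw [Finset.sum_congr rfl (fun k _ => hsum k), Finset.sum_ite_eq']
      simp only [Finset.mem_univ, if_true]
      have hC : C0 ⟨j,hjn⟩ q = if (q:ℕ) = j+1 then (-1:K) else 0 := by
        have hne : ¬ ((j:ℕ) = n-1) := by omega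
        simp only [hC0, Matrix.of_apply, Fin.val_mk]
        by_cases hq : j+1 = (q:ℕ)
        · rw [if_pos hq, if_pos hq.symm]
        · rw [if_neg hq, if_neg hne, if_neg (fun hh => hq hh.symm)]
      rw [hC]
      by_cases hq : (q:ℕ) = j+1
      · rw [if_pos hq, if_pos hq, pow_succ]
      · rw [if_neg hq, if_neg hq, mul_zero]
  -- powers commute through P
  have hAPl : ∀ l : ℕ, A ^ l * P = P * C0 ^ l := by
    intro l
    induction l with
    | zero => simp
    | succ l ih =>
      calc A^(l+1) * P = A^l * (A*P) := by rw [pow_succ, mul_assoc]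
        _ = (A^l * P) * C0 := by rw [hAP, mul_assoc]
        _ = P * C0^(l+1) := by rw [ih, pow_succ, mul_assoc]
  -- P is invertible
  have htri : P.BlockTriangular OrderDual.toDual := by
    intro a b hab
    have hab' : (a:ℕ) < (b:ℕ) := hab
    rw [hP]
    exact if_neg (by omega)
  have hdetP : P.det = 1 := by
    rw [Matrix.det_of_lowerTriangular P htri]
    refine Finset.prod_eq_one fun p _ => ?_
    rw [hP, if_pos le_rfl, Nat.sub_self, esym_zero]
  have : Invertible P := P.invertibleOfIsUnitDet (by simp [hdetP])
  set F : Matrix (Fin n) (Fin n) K := ∑ l : Fin n, c 0 l • C0 ^ (l:ℕ) with hFdef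
  have hZ : Z = ∑ l : Fin n, c 0 l • A ^ (l:ℕ) := by simpa using hc 0
  have hZP : Z * P = P * F := by
    rw [hZ, Finset.sum_mul, Matrix.mul_sum]
    refine Finset.sum_congr rfl fun l _ => ?_
    rw [smul_mul_assoc, Matrix.mul_smul, hAPl]
  have hCF : ∀ j : ℕ, C0 ^ j * F = ∑ l : Fin n, c j l • C0 ^ (l:ℕ) := by
    intro j
    apply Matrix.mul_right_injective_of_invertible P
    calc P * (C0^j * F) = (P * C0^j) * F := by rw [mul_assoc]
      _ = (A^j * P) * F := by rw [hAPl]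
      _ = A^j * (Z * P) := by rw [mul_assoc, hZP]
      _ = (A^j * Z) * P := by rw [mul_assoc]
      _ = (∑ l : Fin n, c j l • A^(l:ℕ)) * P := by rw [hc]
      _ = P * ∑ l : Fin n, c j l • C0^(l:ℕ) := by
          rw [Finset.sum_mul, Matrix.mul_sum]
          exact Finset.sum_congr rfl fun l _ => by
            rw [smul_mul_assoc, Matrix.mul_smul, hAPl]
  have hFentry : ∀ (j l : Fin n), F j l = (-1:K)^((j:ℕ)+(l:ℕ)) * c (j:ℕ) l := by
    intro j l
    have h1 := congrFun (congrFun (hCF (j:ℕ)) ⟨0,h0⟩) l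
    have hl : (C0 ^ (j:ℕ) * F) ⟨0,h0⟩ l = (-1:K)^(j:ℕ) * F j l := by
      rw [Matrix.mul_apply]
      have hterm : ∀ k : Fin n, (C0^(j:ℕ)) ⟨0,h0⟩ k * F k l =
          if k = j then (-1:K)^(j:ℕ) * F j l else 0 := by
        intro k
        rw [hrow (j:ℕ) j.isLt]
        rcases eq_or_ne k j with rfl|hk
        · simp
        · have hkv : ¬((k:ℕ) = (j:ℕ)) := fun hh => hk (Fin.ext hh)
          simp [hkv, hk]
      rw [Finset.sum_congr rfl (fun k _ => hterm k), Finset.sum_ite_eq']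
      simp
    have hr : (∑ l' : Fin n, c (j:ℕ) l' • C0 ^ ((l':ℕ))) ⟨0,h0⟩ l
        = (-1:K)^(l:ℕ) * c (j:ℕ) l := by
      rw [Matrix.sum_apply]
      have hterm : ∀ l' : Fin n, (c (j:ℕ) l' • C0^((l':ℕ))) ⟨0,h0⟩ l =
          if l' = l then (-1:K)^(l:ℕ) * c (j:ℕ) l else 0 := by
        intro l'
        rw [Matrix.smul_apply, hrow (l':ℕ) l'.isLt]
        rcases eq_or_ne l' l with rfl|hk
        · simp [mul_comm]
        · have hkv : ¬((l:ℕ) = (l':ℕ)) := fun hh => hk (Fin.ext hh.symm)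
          simp [hkv, hk]
      rw [Finset.sum_congr rfl (fun l' _ => hterm l'), Finset.sum_ite_eq']
      simp
    have h2 : (-1:K)^(j:ℕ) * F j l = (-1:K)^(l:ℕ) * c (j:ℕ) l := by
      rw [← hl, ← hr, h1]
    have hsq : (-1:K)^(j:ℕ) * (-1:K)^(j:ℕ) = 1 := by
      rw [← pow_add]
      exact Even.neg_one_pow ⟨(j:ℕ), rfl⟩
    calc F j l = ((-1:K)^(j:ℕ) * (-1:K)^(j:ℕ)) * F j l := by rw [hsq, one_mul]
      _ = (-1:K)^(j:ℕ) * ((-1:K)^(l:ℕ) * c (j:ℕ) l) := by rw [mul_assoc, h2]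
      _ = (-1:K)^((j:ℕ)+(l:ℕ)) * c (j:ℕ) l := by rw [pow_add]; ring
  -- the minor factorization
  have hsub : (Z * P).submatrix (Fin.castLE hin) (Fin.castLE hin) =
      (P.submatrix (Fin.castLE hin) (Fin.castLE hin)) *
      (F.submatrix (Fin.castLE hin) (Fin.castLE hin)) := by
    ext p q
    rw [Matrix.submatrix_apply, hZP, Matrix.mul_apply, Matrix.mul_apply]
    simp only [Matrix.submatrix_apply]
    symm
    have := Finset.sum_map (Finset.univ : Finset (Fin i)) (Fin.castLEEmb hin)
      (fun k => P (Fin.castLE hin p) k * F k (Fin.castLE hin q))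
    rw [show (fun k : Fin i => P (Fin.castLE hin p) (Fin.castLEEmb hin k) *
        F (Fin.castLEEmb hin k) (Fin.castLE hin q))
        = (fun k : Fin i => P (Fin.castLE hin p) (Fin.castLE hin k) *
        F (Fin.castLE hin k) (Fin.castLE hin q)) from rfl] at this
    rw [← this]
    apply Finset.sum_subset (Finset.subset_univ _)
    intro k _ hk
    have hki : ¬ ((k:ℕ) < i) := by
      intro hki
      exact hk (Finset.mem_map.2 ⟨⟨(k:ℕ), hki⟩, Finset.mem_univ _, by
        simp [Fin.castLEEmb, Fin.ext_iff]⟩)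
    have hle : ¬ ((k:ℕ) ≤ ((Fin.castLE hin p : Fin n):ℕ)) := by
      have := p.isLt
      simp only [Fin.coe_castLE]
      omega
    rw [hP, if_neg hle, zero_mul]
  rw [hsub, Matrix.det_mul]
  have hdetPsub : (P.submatrix (Fin.castLE hin) (Fin.castLE hin)).det = 1 := by
    rw [Matrix.det_of_lowerTriangular _ (fun a b hab => by
      have hab' : (a:ℕ) < (b:ℕ) := hab
      rw [Matrix.submatrix_apply, hP]
      exact if_neg (by simp; omega))]
    refine Finset.prod_eq_one fun p _ => ?_
    rw [Matrix.submatrix_apply, hP, if_pos le_rfl, Nat.sub_self, esym_zero]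
  rw [hdetPsub, one_mul]
  set D : Matrix (Fin i) (Fin i) K := Matrix.diagonal fun p => (-1:K)^(p:ℕ) with hD
  have hfac : F.submatrix (Fin.castLE hin) (Fin.castLE hin) =
      D * (Matrix.of fun p q : Fin i => c (p:ℕ) (Fin.castLE hin q)) * D := by
    ext p q
    rw [Matrix.mul_diagonal, Matrix.diagonal_mul, Matrix.submatrix_apply, hFentry]
    simp only [Matrix.of_apply, Fin.coe_castLE]
    rw [pow_add]
    ring
  rw [hfac, Matrix.det_mul, Matrix.det_mul, Matrix.det_diagonal]
  have hsq : (∏ p : Fin i, (-1:K)^(p:ℕ)) * (∏ p : Fin i, (-1:K)^(p:ℕ)) = 1 := by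
    rw [← Finset.prod_mul_distrib]
    refine Finset.prod_eq_one fun p _ => ?_
    rw [← pow_add]
    exact Even.neg_one_pow ⟨(p:ℕ), rfl⟩
  rw [mul_right_comm, hsq, one_mul]


/-- Let `A` be upper bidiagonal with distinct invertible diagonal entries and
superdiagonal `-1`, `Z` a matrix commuting with `A`, and define scalars `c_l^{(j)}` by
`A^j Z = Σ_l c_l^{(j)} A^l`.  With `P` the lower unitriangular matrix conjugating `A`
to its companion matrix, the leading principal `i × i` minor of `Z P` equals the
`i × i` determinant `det(c_{l-1}^{(j-1)})_{1 ≤ j,l ≤ i}`. -/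
theorem stmt13 {K : Type*} [Field K] (n : ℕ) (x : ℕ → K)
    (hxd : ∀ p q, 1 ≤ p → p ≤ n → 1 ≤ q → q ≤ n → p ≠ q → x p ≠ x q)
    (hx0 : ∀ p, 1 ≤ p → p ≤ n → x p ≠ 0)
    (A P Z : Matrix (Fin n) (Fin n) K)
    (hA : ∀ p q : Fin n, A p q =
      if p = q then x ((p : ℕ) + 1) else if (p : ℕ) + 1 = (q : ℕ) then -1 else 0)
    (hP : ∀ p q : Fin n, P p q =
      if (q : ℕ) ≤ (p : ℕ) then esym x ((p : ℕ) - (q : ℕ)) (p : ℕ) else 0)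
    (hcomm : A * Z = Z * A)
    (c : ℕ → Fin n → K)
    (hc : ∀ j : ℕ, A ^ j * Z = ∑ l : Fin n, c j l • A ^ (l : ℕ))
    (i : ℕ) (hi1 : 1 ≤ i) (hin : i ≤ n) :
    ((Z * P).submatrix (Fin.castLE hin) (Fin.castLE hin)).det =
      (Matrix.of (fun p q : Fin i => c (p : ℕ) (Fin.castLE hin q))).det :=
  stmt13' n x A P Z hA hP c hc i hi1 hin
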